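/- Assume W_κ(Y,E) is nonempty. The following are equivalent: (i) (Y,E) has no multi-row merging block with respect to κ; (ii) for all F₀, F₁ ∈ F_κ⁺(Y,E) and every t ∈ ℝ, the Hadamard geometric combination F₀^{⊙(1−t)} ⊙ F₁^{⊙t} belongs to F_κ⁺(Y,E) (equivalently, the set {log F : F ∈ F_κ⁺(Y,E)} is an affine subset of F(Y,E)). -/

import Mathlib

open Finset

variable {Y X : Type*}

/-- `F ∈ F(Y,E)` : matrices supported on the edge set `E`. -/
def MemF (E : Set (Y × Y)) (F : Y → Y → ℝ) : Prop :=
  ∀ y y' : Y, (y, y') ∉ E → F y y' = 0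

/-- `F ∈ F⁺(Y,E)` : member of `F(Y,E)` positive on every edge of `E`. -/
def MemFpos (E : Set (Y × Y)) (F : Y → Y → ℝ) : Prop :=
  MemF E F ∧ ∀ y y' : Y, (y, y') ∈ E → 0 < F y y'

/-- Every row sums to `1`. -/
def RowStochastic [Fintype Y] (F : Y → Y → ℝ) : Prop :=
  ∀ y : Y, ∑ y' : Y, F y y' = 1

/-- `F ∈ W(Y,E)` : row-stochastic members of `F⁺(Y,E)`. -/
def MemW [Fintype Y] (E : Set (Y × Y)) (F : Y → Y → ℝ) : Prop :=
  MemFpos E F ∧ RowStochastic F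

/-- The lumped edge set `D = κ₂(E) = {(κ y, κ y') : (y,y') ∈ E}`. -/
def lumpedEdges (E : Set (Y × Y)) (κ : Y → X) : Set (X × X) :=
  {p | ∃ q ∈ E, κ q.1 = p.1 ∧ κ q.2 = p.2}

/-- `blockSum κ F y x' = Σ_{y' ∈ S_{x'}} F y y'`. -/
def blockSum [Fintype Y] [DecidableEq X] (κ : Y → X) (F : Y → Y → ℝ) (y : Y) (x' : X) : ℝ :=
  ∑ y' ∈ Finset.univ.filter (fun y' => κ y' = x'), F y y'

/-- Kemeny–Snell `κ`-lumpability of a matrix `F`. -/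
def Lumpable [Fintype Y] [DecidableEq X] (E : Set (Y × Y)) (κ : Y → X) (F : Y → Y → ℝ) : Prop :=
  ∀ x x' : X, (x, x') ∈ lumpedEdges E κ →
    ∀ y₁ y₂ : Y, κ y₁ = x → κ y₂ = x → blockSum κ F y₁ x' = blockSum κ F y₂ x'

/-- `W_κ(Y,E)` : the set of `κ`-lumpable irreducible stochastic matrices. -/
def Wkappa [Fintype Y] [DecidableEq X] (E : Set (Y × Y)) (κ : Y → X) : Set (Y → Y → ℝ) :=
  {P | MemW E P ∧ Lumpable E κ P}

/-- Strong connectivity of the digraph with edge set `E`. -/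
def StronglyConnected {V : Type*} (E : Set (V × V)) : Prop :=
  ∀ v v' : V, Relation.ReflTransGen (fun a b => (a, b) ∈ E) v v'

/-- Hadamard geometric combination `F₀^{⊙(1−t)} ⊙ F₁^{⊙t}` (entries off `E` set to `0`). -/
noncomputable def hadGeom (E : Set (Y × Y)) (F₀ F₁ : Y → Y → ℝ) (t : ℝ) : Y → Y → ℝ :=
  fun y y' => E.indicator (fun p => F₀ p.1 p.2 ^ (1 - t) * F₁ p.1 p.2 ^ t) (y, y')

/-- `Q` is an s-normalization of `F`. -/
def IsSNorm [Fintype Y] (F Q : Y → Y → ℝ) : Prop :=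
  ∃ (ρ : ℝ) (v : Y → ℝ), 0 < ρ ∧ (∀ y, 0 < v y) ∧
    (∀ y y' : Y, Q y y' = F y y' * v y' / (ρ * v y)) ∧ RowStochastic Q

/-- e-geodesic closedness of a family `V ⊆ W(Y,E)`. -/
def EGeodClosed [Fintype Y] (E : Set (Y × Y)) (V : Set (Y → Y → ℝ)) : Prop :=
  ∀ P₀ ∈ V, ∀ P₁ ∈ V, ∀ (t : ℝ) (Q : Y → Y → ℝ),
    IsSNorm (hadGeom E P₀ P₁ t) Q → Q ∈ V

/-- `(x,x')` is a merging block of `(Y,E)` with respect to `κ`. -/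
def MergingBlock (E : Set (Y × Y)) (κ : Y → X) (x x' : X) : Prop :=
  ∃ y y₁' y₂' : Y, κ y = x ∧ κ y₁' = x' ∧ κ y₂' = x' ∧ y₁' ≠ y₂' ∧
    (y, y₁') ∈ E ∧ (y, y₂') ∈ E

/-- `(x,x')` is a multi-row merging block: a merging block with `|S_x| ≥ 2`. -/
def MultiRowMergingBlock (E : Set (Y × Y)) (κ : Y → X) (x x' : X) : Prop :=
  MergingBlock E κ x x' ∧ ∃ y₁ y₂ : Y, y₁ ≠ y₂ ∧ κ y₁ = x ∧ κ y₂ = x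

/-- Entrywise logarithm on `E`, zero off `E`. -/
noncomputable def logMat (E : Set (Y × Y)) (F : Y → Y → ℝ) : Y → Y → ℝ :=
  fun y y' => E.indicator (fun p => Real.log (F p.1 p.2)) (y, y')

/-- Entrywise exponential on `E`, zero off `E`. -/
noncomputable def expMat (E : Set (Y × Y)) (G : Y → Y → ℝ) : Y → Y → ℝ :=
  fun y y' => E.indicator (fun p => Real.exp (G p.1 p.2)) (y, y')

/-- `G_κ(Y,E) = { log F : F ∈ F_κ⁺(Y,E) }`. -/
def Gkappa [Fintype Y] [DecidableEq X] (E : Set (Y × Y)) (κ : Y → X) : Set (Y → Y → ℝ) :=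
  {G | ∃ F : Y → Y → ℝ, MemFpos E F ∧ Lumpable E κ F ∧ G = logMat E F}

/-- `N(Y,E)`: matrices of the form `(y,y') ↦ f y' - f y + c` on `E`, zero off `E`. -/
def Nset (E : Set (Y × Y)) : Set (Y → Y → ℝ) :=
  {N | MemF E N ∧ ∃ (f : Y → ℝ) (c : ℝ), ∀ y y' : Y, (y, y') ∈ E → N y y' = f y' - f y + c}

private lemma rpow_same_base {a : ℝ} (t : ℝ) (ha : 0 < a) :
    a ^ (1 - t) * a ^ t = a := by
  rw [← Real.rpow_add ha, sub_add_cancel, Real.rpow_one]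

private lemma rpow_two_helper (a b : ℝ) : a ^ ((1:ℝ)-2) * b ^ (2:ℝ) = a⁻¹ * b^2 := by
  rw [show (1:ℝ)-2 = -1 by norm_num, Real.rpow_neg_one,
    show (2:ℝ) = ((2:ℕ):ℝ) by norm_num, Real.rpow_natCast]

private lemma memFpos_nonneg {E : Set (Y × Y)} {F : Y → Y → ℝ} (hF : MemFpos E F)
    (a b : Y) : 0 ≤ F a b := by
  by_cases h : (a, b) ∈ E
  · exact (hF.2 a b h).le
  · rw [hF.1 a b h]

private lemma blockSum_pos [Fintype Y] [DecidableEq X] {E : Set (Y × Y)} {κ : Y → X}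
    {F : Y → Y → ℝ} (hF : MemFpos E F) (hL : Lumpable E κ F) {x x' : X}
    (hD : (x, x') ∈ lumpedEdges E κ) {y : Y} (hy : κ y = x) :
    0 < blockSum κ F y x' := by
  obtain ⟨q, hqE, hq1, hq2⟩ := hD
  have hmem : q.2 ∈ Finset.univ.filter (fun v => κ v = x') :=
    Finset.mem_filter.mpr ⟨Finset.mem_univ _, hq2⟩
  have h1 : F q.1 q.2 ≤ blockSum κ F q.1 x' :=
    Finset.single_le_sum (f := fun v => F q.1 v)
      (fun i _ => memFpos_nonneg hF _ _) hmem
  have h2 : 0 < F q.1 q.2 := hF.2 _ _ hqE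
  rw [hL x x' ⟨q, hqE, hq1, hq2⟩ y q.1 hy hq1]
  linarith

private lemma exists_edge_into_block [Fintype Y] [DecidableEq X] {E : Set (Y × Y)}
    {κ : Y → X} {F : Y → Y → ℝ} (hF : MemFpos E F) (hL : Lumpable E κ F) {x x' : X}
    (hD : (x, x') ∈ lumpedEdges E κ) {y : Y} (hy : κ y = x) :
    ∃ v, κ v = x' ∧ (y, v) ∈ E := by
  by_contra h
  push_neg at h
  have hz : blockSum κ F y x' = 0 := by
    refine Finset.sum_eq_zero fun v hv => ?_
    exact hF.1 y v (h v (Finset.mem_filter.mp hv).2)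
  have := blockSum_pos hF hL hD hy
  linarith

/-- `(Y,E)` has no multi-row merging block with respect to `κ` iff the
positive lumpable cone `F_κ⁺(Y,E)` is closed under Hadamard geometric combinations
(equivalently, its log is affine). -/
theorem log_affinity_iff_no_multiRow_mergingBlock [Fintype Y] [Fintype X] [DecidableEq X]
    (E : Set (Y × Y)) (κ : Y → X) (hsurj : Function.Surjective κ)
    (hconn : StronglyConnected E)
    (hne : (Wkappa E κ).Nonempty) :
    (¬ ∃ x x' : X, MultiRowMergingBlock E κ x x') ↔
      (∀ F₀ F₁ : Y → Y → ℝ,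
        MemFpos E F₀ → Lumpable E κ F₀ → MemFpos E F₁ → Lumpable E κ F₁ →
        ∀ t : ℝ, MemFpos E (hadGeom E F₀ F₁ t) ∧ Lumpable E κ (hadGeom E F₀ F₁ t)) := by
  classical
  constructor
  · -- no multi-row merging block → closed under Hadamard geometric combinations
    intro hno F₀ F₁ h0p h0l h1p h1l t
    constructor
    · constructor
      · intro y y' h
        exact Set.indicator_of_notMem h _
      · intro y y' h
        show E.indicator _ (y, y') > 0
        rw [Set.indicator_of_mem h]
        exact mul_pos (Real.rpow_pos_of_pos (h0p.2 y y' h) _)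
          (Real.rpow_pos_of_pos (h1p.2 y y' h) _)
    · intro x x' hD y₁ y₂ hk1 hk2
      by_cases hyy : y₁ = y₂
      · subst hyy; rfl
      have hnm : ¬ MergingBlock E κ x x' := fun hm =>
        hno ⟨x, x', hm, y₁, y₂, hyy, hk1, hk2⟩
      have huniq : ∀ u, κ u = x → ∀ v v', κ v = x' → κ v' = x' →
          (u, v) ∈ E → (u, v') ∈ E → v = v' := by
        intro u hu v v' hv hv' he he'
        by_contra hne'
        exact hnm ⟨u, v, v', hu, hv, hv', hne', he, he'⟩
      have key : ∀ u, κ u = x → blockSum κ (hadGeom E F₀ F₁ t) u x' =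
          (blockSum κ F₀ u x') ^ (1 - t) * (blockSum κ F₁ u x') ^ t := by
        intro u hu
        obtain ⟨v, hv, hvE⟩ := exists_edge_into_block h0p h0l hD hu
        have hvmem : v ∈ Finset.univ.filter (fun w => κ w = x') :=
          Finset.mem_filter.mpr ⟨Finset.mem_univ _, hv⟩
        have hnotE : ∀ w, κ w = x' → w ≠ v → (u, w) ∉ E := by
          intro w hw hwv he
          exact hwv (huniq u hu w v hw hv he hvE)
        have hbs0 : blockSum κ F₀ u x' = F₀ u v := by
          refine Finset.sum_eq_single_of_mem v hvmem fun w hw hwv => ?_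
          exact h0p.1 u w (hnotE w (Finset.mem_filter.mp hw).2 hwv)
        have hbs1 : blockSum κ F₁ u x' = F₁ u v := by
          refine Finset.sum_eq_single_of_mem v hvmem fun w hw hwv => ?_
          exact h1p.1 u w (hnotE w (Finset.mem_filter.mp hw).2 hwv)
        have hbsH : blockSum κ (hadGeom E F₀ F₁ t) u x' = hadGeom E F₀ F₁ t u v := by
          refine Finset.sum_eq_single_of_mem v hvmem fun w hw hwv => ?_
          exact Set.indicator_of_notMem (hnotE w (Finset.mem_filter.mp hw).2 hwv) _
        rw [hbsH, hbs0, hbs1]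
        show E.indicator _ (u, v) = _
        rw [Set.indicator_of_mem hvE]
      rw [key y₁ hk1, key y₂ hk2, h0l x x' hD y₁ y₂ hk1 hk2,
        h1l x x' hD y₁ y₂ hk1 hk2]
  · -- closure → no multi-row merging block
    intro h hmb
    obtain ⟨x, x', ⟨y, w₁, w₂, hky, hkw₁, hkw₂, hww, hE1, hE2⟩, z₁, z₂, hz12, hkz₁, hkz₂⟩ := hmb
    obtain ⟨P, ⟨hPpos, _⟩, hPlump⟩ := hne
    -- a row z in S_x distinct from y
    obtain ⟨z, hkz, hzy⟩ : ∃ z, κ z = x ∧ z ≠ y := by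
      by_cases h1 : z₁ = y
      · exact ⟨z₂, hkz₂, fun h2 => hz12 (h1.trans h2.symm)⟩
      · exact ⟨z₁, hkz₁, h1⟩
    have hD : (x, x') ∈ lumpedEdges E κ := ⟨(y, w₁), hE1, hky, hkw₁⟩
    set a₁ := P y w₁ with ha₁def
    set a₂ := P y w₂ with ha₂def
    have ha₁ : 0 < a₁ := hPpos.2 y w₁ hE1
    have ha₂ : 0 < a₂ := hPpos.2 y w₂ hE2
    set δ := a₂ / 2 with hδdef
    have hδ : 0 < δ := by positivity
    have hδa₂ : δ < a₂ := by rw [hδdef]; linarith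
    set F₁ : Y → Y → ℝ := fun u v =>
      P u v + (if u = y ∧ v = w₁ then δ else 0) - (if u = y ∧ v = w₂ then δ else 0)
      with hF₁def
    have hF₁eq : ∀ u v, u ≠ y → F₁ u v = P u v := by
      intro u v hu; simp [hF₁def, hu]
    have hF₁eq' : ∀ v, v ≠ w₁ → v ≠ w₂ → F₁ y v = P y v := by
      intro v h1 h2; simp [hF₁def, h1, h2]
    have hF₁w₁ : F₁ y w₁ = a₁ + δ := by
      simp [hF₁def, hww, ha₁def]
    have hF₁w₂ : F₁ y w₂ = a₂ - δ := by
      simp [hF₁def, hww.symm, ha₂def]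
    have hF₁entry : ∀ u v, F₁ u v = P u v ∨ (u = y ∧ v = w₁) ∨ (u = y ∧ v = w₂) := by
      intro u v
      by_cases h1 : u = y
      · by_cases h2 : v = w₁
        · exact Or.inr (Or.inl ⟨h1, h2⟩)
        by_cases h3 : v = w₂
        · exact Or.inr (Or.inr ⟨h1, h3⟩)
        · exact Or.inl (h1 ▸ hF₁eq' v h2 h3)
      · exact Or.inl (hF₁eq u v h1)
    have hF₁pos : MemFpos E F₁ := by
      constructor
      · intro u v huv
        rcases hF₁entry u v with hh | ⟨h1, h2⟩ | ⟨h1, h2⟩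
        · rw [hh]; exact hPpos.1 u v huv
        · exact absurd (h1 ▸ h2 ▸ hE1) huv
        · exact absurd (h1 ▸ h2 ▸ hE2) huv
      · intro u v huv
        rcases hF₁entry u v with hh | ⟨h1, h2⟩ | ⟨h1, h2⟩
        · rw [hh]; exact hPpos.2 u v huv
        · subst h1; subst h2; rw [hF₁w₁]; linarith
        · subst h1; subst h2; rw [hF₁w₂]; linarith
    -- block sums of F₁ agree with those of P
    have hbsF₁ : ∀ u x'', blockSum κ F₁ u x'' = blockSum κ P u x'' := by
      intro u x''
      unfold blockSum
      rw [show (∑ v ∈ Finset.univ.filter (fun v => κ v = x''), F₁ u v) =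
          (∑ v ∈ Finset.univ.filter (fun v => κ v = x''), P u v)
          + (∑ v ∈ Finset.univ.filter (fun v => κ v = x''),
              (if u = y ∧ v = w₁ then δ else 0))
          - (∑ v ∈ Finset.univ.filter (fun v => κ v = x''),
              (if u = y ∧ v = w₂ then δ else 0)) by
        rw [← Finset.sum_add_distrib, ← Finset.sum_sub_distrib]]
      have e1 : (∑ v ∈ Finset.univ.filter (fun v => κ v = x''),
          (if u = y ∧ v = w₁ then δ else 0)) =
          if κ w₁ = x'' then (if u = y then δ else 0) else 0 := by
        rw [show (fun v => if u = y ∧ v = w₁ then δ else 0) =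
            (fun v => if v = w₁ then (if u = y then δ else 0) else 0) by
          funext v; by_cases h1 : u = y <;> by_cases h2 : v = w₁ <;> simp [h1, h2]]
        rw [Finset.sum_ite_eq' _ w₁ (fun _ => if u = y then δ else 0)]
        simp [Finset.mem_filter]
      have e2 : (∑ v ∈ Finset.univ.filter (fun v => κ v = x''),
          (if u = y ∧ v = w₂ then δ else 0)) =
          if κ w₂ = x'' then (if u = y then δ else 0) else 0 := by
        rw [show (fun v => if u = y ∧ v = w₂ then δ else 0) =
            (fun v => if v = w₂ then (if u = y then δ else 0) else 0) by
          funext v; by_cases h1 : u = y <;> by_cases h2 : v = w₂ <;> simp [h1, h2]]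
        rw [Finset.sum_ite_eq' _ w₂ (fun _ => if u = y then δ else 0)]
        simp [Finset.mem_filter]
      rw [e1, e2, hkw₁, hkw₂]
      ring
    have hF₁lump : Lumpable E κ F₁ := by
      intro a a' hD' u₁ u₂ h1 h2
      rw [hbsF₁, hbsF₁]
      exact hPlump a a' hD' u₁ u₂ h1 h2
    -- apply the closure hypothesis at t = 2
    have hlump := (h P F₁ hPpos hPlump hF₁pos hF₁lump 2).2
    set H := hadGeom E P F₁ 2 with hHdef
    have hHz : ∀ v, H z v = P z v := by
      intro v
      by_cases hE : (z, v) ∈ E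
      · show E.indicator _ (z, v) = _
        rw [Set.indicator_of_mem hE]
        simp only
        rw [hF₁eq z v hzy, rpow_two_helper]
        have := hPpos.2 z v hE
        field_simp
      · have h0 : H z v = 0 := Set.indicator_of_notMem hE _
        rw [h0, hPpos.1 z v hE]
    have hbsHz : blockSum κ H z x' = blockSum κ P z x' := by
      unfold blockSum; exact Finset.sum_congr rfl fun v _ => hHz v
    have hPzy : blockSum κ P z x' = blockSum κ P y x' :=
      hPlump x x' hD z y hkz hky
    -- compute blockSum H y x'
    have hHyv : ∀ v, v ≠ w₁ → v ≠ w₂ → H y v = P y v := by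
      intro v h1 h2
      by_cases hE : (y, v) ∈ E
      · show E.indicator _ (y, v) = _
        rw [Set.indicator_of_mem hE]
        simp only
        rw [hF₁eq' v h1 h2, rpow_two_helper]
        have := hPpos.2 y v hE
        field_simp
      · have h0 : H y v = 0 := Set.indicator_of_notMem hE _
        rw [h0, hPpos.1 y v hE]
    have hHw₁ : H y w₁ = a₁⁻¹ * (a₁ + δ)^2 := by
      show E.indicator _ (y, w₁) = _
      rw [Set.indicator_of_mem hE1]
      simp only
      rw [hF₁w₁, rpow_two_helper, ha₁def]
    have hHw₂ : H y w₂ = a₂⁻¹ * (a₂ - δ)^2 := by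
      show E.indicator _ (y, w₂) = _
      rw [Set.indicator_of_mem hE2]
      simp only
      rw [hF₁w₂, rpow_two_helper, ha₂def]
    have hbsHy : blockSum κ H y x' = blockSum κ P y x' +
        ((a₁⁻¹ * (a₁ + δ)^2 - a₁) + (a₂⁻¹ * (a₂ - δ)^2 - a₂)) := by
      have hsub : ({w₁, w₂} : Finset Y) ⊆ Finset.univ.filter (fun v => κ v = x') := by
        intro v hv
        rcases Finset.mem_insert.mp hv with h | h
        · subst h; exact Finset.mem_filter.mpr ⟨Finset.mem_univ _, hkw₁⟩
        · rw [Finset.mem_singleton.mp h]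
          exact Finset.mem_filter.mpr ⟨Finset.mem_univ _, hkw₂⟩
      have hzero : ∀ v ∈ Finset.univ.filter (fun v => κ v = x'),
          v ∉ ({w₁, w₂} : Finset Y) → H y v - P y v = 0 := by
        intro v _ hv
        simp only [Finset.mem_insert, Finset.mem_singleton, not_or] at hv
        rw [hHyv v hv.1 hv.2, sub_self]
      have hsum : (∑ v ∈ ({w₁, w₂} : Finset Y), (H y v - P y v))
          = blockSum κ H y x' - blockSum κ P y x' := by
        rw [Finset.sum_subset hsub hzero]
        unfold blockSum
        exact Finset.sum_sub_distrib _ _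
      rw [Finset.sum_pair hww, hHw₁, hHw₂] at hsum
      linarith [hsum, ha₁def, ha₂def]
    -- contradiction
    have hfinal := hlump x x' hD y z hky hkz
    rw [hbsHy, hbsHz, hPzy] at hfinal
    have hpos1 : a₁⁻¹ * (a₁ + δ)^2 - a₁ = 2*δ + δ^2/a₁ := by
      field_simp; ring
    have hpos2 : a₂⁻¹ * (a₂ - δ)^2 - a₂ = -(2*δ) + δ^2/a₂ := by
      field_simp; ring
    rw [hpos1, hpos2] at hfinal
    have : (0:ℝ) < δ^2/a₁ + δ^2/a₂ := by positivity
    linarith
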